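/- The set of zeros of Q in the right half-plane, {s ∈ ℂ : Re(s) > 0 and Q(s) = 0}, is infinite. -/

import Mathlib

/-- `Q(s) = 1 - 2∑_{k≥1} exp(-s√(k(k+2))/2)`. -/
noncomputable def Qfun (s : ℂ) : ℂ :=
  1 - 2 * ∑' k : ℕ,
    Complex.exp (-(s * (Real.sqrt (((k : ℝ) + 1) * (((k : ℝ) + 1) + 2)) : ℂ) / 2))

/-!
`Q = 1 - 2 ∑ₖ e^{-s ℓₖ}` with frequencies `ℓₖ ≥ (k + 1)/2`, so it is holomorphic on `Re s > 0`.
Applying Dirichlet's simultaneous approximation to the finitely many frequencies that matter up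
to `ε`, one finds arbitrarily large `τ` with `|Q(s + iτ) - Q(s)| < ε` uniformly on `Re s ≥ a`.
On the real axis `Q(1/2) < 0 < Q(4)`, so `Q` has a real zero `σ₀`, isolated because `Q ≢ 0`.
If `m > 0` is the minimum of `|Q|` on a small circle around `σ₀` and `τ` is an `m/2`-almost period,
the minimum modulus principle forces `Q(· + iτ)` to vanish inside that circle. Hence `Q` has zeros
with arbitrarily large imaginary part.
-/

open Complex Metric Filter Topology Set

theorem exists_ge_forall_norm_cexp_sub_one_lt {ι : Type*} [Fintype ι] (θ : ι → ℝ) {δ : ℝ}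
    (hδ : 0 < δ) (T : ℝ) : ∃ τ ≥ T, ∀ i, ‖cexp (τ * θ i * I) - 1‖ < δ := by
  -- Two close points `u m`, `u n` of the bounded orbit below give the almost period `(n - m) T'`.
  set T' := max T 1
  have hT' : 0 < T' := lt_max_of_lt_right one_pos
  set u : ℕ → ι → ℂ := fun n i => cexp ((n * T' : ℝ) * θ i * I)
  have hnorm_u : ∀ n i, ‖u n i‖ = 1 := fun n i => by
    simpa [u] using norm_exp_ofReal_mul_I (n * T' * θ i)
  have hu_bdd : ∀ n, u n ∈ closedBall (0 : ι → ℂ) 1 := fun n => by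
    simpa using (pi_norm_le_iff_of_nonneg zero_le_one).2 fun i => (hnorm_u n i).le
  obtain ⟨_, _, φ, hφ, hlim⟩ := tendsto_subseq_of_bounded isBounded_closedBall hu_bdd
  obtain ⟨N, hN⟩ := Metric.cauchySeq_iff'.1 hlim.cauchySeq δ hδ
  refine ⟨((φ (N + 1) : ℝ) - φ N) * T', ?_, fun i => ?_⟩
  · have : (1 : ℝ) ≤ (φ (N + 1) : ℝ) - φ N := by
      have := hφ (Nat.lt_succ_self N)
      rw [le_sub_iff_add_le']
      exact_mod_cast this
    nlinarith [le_max_left T 1]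
  · have hfactor : u (φ (N + 1)) i - u (φ N) i
        = u (φ N) i * (cexp ((((φ (N + 1) : ℝ) - φ N) * T' : ℝ) * θ i * I) - 1) := by
      simp only [u, mul_sub, ← Complex.exp_add]
      push_cast
      ring_nf
    calc ‖cexp ((((φ (N + 1) : ℝ) - φ N) * T' : ℝ) * θ i * I) - 1‖
        = ‖u (φ (N + 1)) i - u (φ N) i‖ := by rw [hfactor, norm_mul, hnorm_u, one_mul]
      _ ≤ dist (u (φ (N + 1))) (u (φ N)) := by
          rw [dist_eq_norm]; exact norm_le_pi_norm (u (φ (N + 1)) - u (φ N)) i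
      _ < δ := hN (N + 1) (Nat.le_succ N)

theorem exists_mem_ball_eq_zero_of_norm_center_lt {g : ℂ → ℂ} {c : ℂ} {r : ℝ} (hr : 0 < r)
    (hg : DiffContOnCl ℂ g (ball c r)) (h : ∀ z ∈ sphere c r, ‖g c‖ < ‖g z‖) :
    ∃ z ∈ ball c r, g z = 0 := by
  by_contra! hne
  have hne' : ∀ z ∈ closure (ball c r), g z ≠ 0 := by
    rw [closure_ball c hr.ne', ← ball_union_sphere]
    rintro z (hz | hz)
    · exact hne z hz
    · exact norm_pos_iff.1 ((norm_nonneg _).trans_lt (h z hz))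
  obtain ⟨z, hz, hmax⟩ := Complex.exists_mem_frontier_isMaxOn_norm isBounded_ball
    (nonempty_ball.2 hr) (hg.inv hne')
  rw [frontier_ball c hr.ne'] at hz
  have hc : ‖(g c)⁻¹‖ ≤ ‖(g z)⁻¹‖ := hmax (subset_closure (mem_ball_self hr))
  rw [norm_inv, norm_inv, inv_le_inv₀ (norm_pos_iff.2 (hne c (mem_ball_self hr)))
    (norm_pos_iff.2 (hne' z (by rw [closure_ball c hr.ne']; exact sphere_subset_closedBall hz)))]
    at hc
  exact (h z hz).not_ge hc

theorem AnalyticAt.exists_sphere_pos_le_norm {f : ℂ → ℂ} {c : ℂ} (hf : AnalyticAt ℂ f c)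
    (hnz : ¬∀ᶠ z in 𝓝 c, f z = 0) {ε : ℝ} (hε : 0 < ε) :
    ∃ r ∈ Ioo 0 ε, ∃ m > 0, ∀ z ∈ sphere c r, m ≤ ‖f z‖ := by
  have hne : ∀ᶠ z in 𝓝[≠] c, ContinuousAt f z ∧ f z ≠ 0 :=
    ((hf.eventually_analyticAt.mono fun _ h => h.continuousAt).filter_mono
      nhdsWithin_le_nhds).and
      (hf.eventually_eq_zero_or_eventually_ne_zero.resolve_left hnz)
  obtain ⟨ρ, hρ, hball⟩ := Metric.eventually_nhds_iff.1 (eventually_nhdsWithin_iff.1 hne)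
  set r := min (ρ / 2) (ε / 2)
  have hr : 0 < r := lt_min (half_pos hρ) (half_pos hε)
  have hsphere : ∀ z ∈ sphere c r, ContinuousAt f z ∧ f z ≠ 0 := fun z hz => by
    refine hball (by rw [mem_sphere.1 hz]; linarith [min_le_left (ρ / 2) (ε / 2)]) ?_
    rintro rfl
    exact hr.ne (by simpa using hz)
  obtain ⟨z₀, hz₀, hmin⟩ := (isCompact_sphere c r).exists_isMinOn
    (NormedSpace.sphere_nonempty.2 hr.le)
    (continuousOn_of_forall_continuousAt fun z hz => (hsphere z hz).1.norm)
  exact ⟨r, ⟨hr, (min_le_right _ _).trans_lt (half_lt_self hε)⟩, ‖f z₀‖,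
    norm_pos_iff.2 (hsphere z₀ hz₀).2, fun _ hz => hmin hz⟩

theorem exists_mem_ball_eq_zero_of_norm_sub_lt {f g : ℂ → ℂ} {c : ℂ} {r m : ℝ} (hr : 0 < r)
    (hg : DiffContOnCl ℂ g (ball c r)) (hfc : f c = 0) (hf : ∀ z ∈ sphere c r, m ≤ ‖f z‖)
    (hgf : ∀ z ∈ closedBall c r, ‖g z - f z‖ < m / 2) : ∃ z ∈ ball c r, g z = 0 := by
  refine exists_mem_ball_eq_zero_of_norm_center_lt hr hg fun z hz => ?_
  have hgc : ‖g c‖ < m / 2 := by simpa [hfc] using hgf c (mem_closedBall_self hr.le)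
  have hgz := hgf z (sphere_subset_closedBall hz)
  linarith [hf z hz, norm_le_norm_add_norm_sub (g z) (f z)]

def VerticallyAlmostPeriodic (f : ℂ → ℂ) : Prop :=
  ∀ a > 0, ∀ ε > 0, ∀ T : ℝ, ∃ τ ≥ T, ∀ s : ℂ, a ≤ s.re → ‖f (s + τ * I) - f s‖ < ε

theorem VerticallyAlmostPeriodic.const_sub_const_mul {f : ℂ → ℂ}
    (hf : VerticallyAlmostPeriodic f) (c d : ℂ) :
    VerticallyAlmostPeriodic fun s => c - d * f s := by
  intro a ha ε hε T
  obtain ⟨τ, hτ, hclose⟩ := hf a ha (ε / (‖d‖ + 1)) (by positivity) T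
  refine ⟨τ, hτ, fun s hs => ?_⟩
  calc ‖c - d * f (s + τ * I) - (c - d * f s)‖ = ‖d‖ * ‖f (s + τ * I) - f s‖ := by
        rw [← norm_mul, ← norm_neg]; ring_nf
    _ ≤ (‖d‖ + 1) * ‖f (s + τ * I) - f s‖ := by gcongr; linarith
    _ < (‖d‖ + 1) * (ε / (‖d‖ + 1)) := by gcongr; exact hclose s hs
    _ = ε := mul_div_cancel₀ ε (by positivity)

theorem sub_le_re_of_mem_closedBall {c z : ℂ} {r : ℝ} (hz : z ∈ closedBall c r) :
    c.re - r ≤ z.re := by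
  have := (abs_le.1 ((abs_re_le_norm (z - c)).trans (mem_closedBall_iff_norm.1 hz))).1
  rw [sub_re] at this
  linarith

theorem sub_lt_im_of_mem_ball {c z : ℂ} {r : ℝ} (hz : z ∈ ball c r) : c.im - r < z.im := by
  have := (abs_lt.1 ((abs_im_le_norm (z - c)).trans_lt (mem_ball_iff_norm.1 hz))).1
  rw [sub_im] at this
  linarith

theorem VerticallyAlmostPeriodic.exists_zero_im_gt {f : ℂ → ℂ} (hap : VerticallyAlmostPeriodic f)
    (hf : DifferentiableOn ℂ f {s | 0 < s.re}) {s₀ z₁ : ℂ} (hs₀ : 0 < s₀.re) (hfs₀ : f s₀ = 0)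
    (hz₁ : 0 < z₁.re) (hfz₁ : f z₁ ≠ 0) (T : ℝ) :
    ∃ s ∈ {s : ℂ | 0 < s.re ∧ f s = 0}, T < s.im := by
  have hU : IsOpen {s : ℂ | 0 < s.re} := isOpen_lt continuous_const continuous_re
  have hfa := hf.analyticOnNhd hU
  have hnz : ¬∀ᶠ z in 𝓝 s₀, f z = 0 := fun h => hfz₁ <|
    hfa.eqOn_zero_of_preconnected_of_eventuallyEq_zero (convex_halfSpace_re_gt 0).isPreconnected
      hs₀ h hz₁
  obtain ⟨r, ⟨hr, hrs₀⟩, m, hm, hsphere⟩ :=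
    (hfa s₀ hs₀).exists_sphere_pos_le_norm hnz (half_pos hs₀)
  have hball_re : ∀ z ∈ closedBall s₀ r, s₀.re / 2 ≤ z.re := fun z hz => by
    linarith [sub_le_re_of_mem_closedBall hz]
  obtain ⟨τ, hτ, hclose⟩ := hap _ (half_pos hs₀) _ (half_pos hm) (T + r - s₀.im)
  have hg : DiffContOnCl ℂ (fun z => f (z + τ * I)) (ball s₀ r) := by
    refine DifferentiableOn.diffContOnCl_ball (U := {z | 0 < z.re}) ?_ fun z hz => ?_
    · exact hf.comp (differentiableOn_id.add_const _) fun z hz => by simpa using hz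
    · exact (half_pos hs₀).trans_le (hball_re z hz)
  obtain ⟨z, hz, hgz⟩ := exists_mem_ball_eq_zero_of_norm_sub_lt hr hg hfs₀ hsphere
    fun z hz => hclose z (hball_re z hz)
  refine ⟨z + τ * I, ⟨?_, hgz⟩, ?_⟩
  · simpa using (half_pos hs₀).trans_le (hball_re z (ball_subset_closedBall hz))
  · simpa using (by linarith [sub_lt_im_of_mem_ball hz] : T < z.im + τ)

theorem VerticallyAlmostPeriodic.setOf_zero_infinite {f : ℂ → ℂ}
    (hap : VerticallyAlmostPeriodic f) (hf : DifferentiableOn ℂ f {s | 0 < s.re}) {s₀ z₁ : ℂ}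
    (hs₀ : 0 < s₀.re) (hfs₀ : f s₀ = 0) (hz₁ : 0 < z₁.re) (hfz₁ : f z₁ ≠ 0) :
    {s : ℂ | 0 < s.re ∧ f s = 0}.Infinite :=
  Set.Infinite.of_image im <| Set.infinite_of_forall_exists_gt fun T =>
    let ⟨s, hs, hT⟩ := hap.exists_zero_im_gt hf hs₀ hfs₀ hz₁ hfz₁ T
    ⟨s.im, mem_image_of_mem _ hs, hT⟩

noncomputable def expSum (ℓ : ℕ → ℝ) (s : ℂ) : ℂ := ∑' k, cexp (-(s * ℓ k))

theorem norm_cexp_neg_mul_le {s : ℂ} {a x : ℝ} (hx : 0 ≤ x) (has : a ≤ s.re) :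
    ‖cexp (-(s * x))‖ ≤ Real.exp (-(a * x)) := by
  rw [norm_exp, neg_re, re_mul_ofReal, Real.exp_le_exp, neg_le_neg_iff]
  exact mul_le_mul_of_nonneg_right has hx

section expSum

variable {ℓ : ℕ → ℝ}

theorem summable_cexp_neg_mul (hℓ : ∀ k, 0 ≤ ℓ k)
    (hsum : ∀ a > 0, Summable fun k => Real.exp (-(a * ℓ k))) {s : ℂ} (hs : 0 < s.re) :
    Summable fun k => cexp (-(s * ℓ k)) :=
  (hsum _ hs).of_norm_bounded fun k => norm_cexp_neg_mul_le (hℓ k) le_rfl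

theorem differentiableOn_expSum (hℓ : ∀ k, 0 ≤ ℓ k)
    (hsum : ∀ a > 0, Summable fun k => Real.exp (-(a * ℓ k))) :
    DifferentiableOn ℂ (expSum ℓ) {s | 0 < s.re} := by
  intro s hs
  have hU : IsOpen {w : ℂ | s.re / 2 < w.re} := isOpen_lt continuous_const continuous_re
  have hdiff : DifferentiableOn ℂ (expSum ℓ) {w | s.re / 2 < w.re} :=
    Complex.differentiableOn_tsum_of_summable_norm (hsum _ (half_pos hs))
      (fun k => by fun_prop) hU fun k w hw => norm_cexp_neg_mul_le (hℓ k) (le_of_lt hw)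
  exact (hdiff.differentiableAt (hU.mem_nhds (half_lt_self hs : s.re / 2 < s.re)))
    |>.differentiableWithinAt

theorem expSum_add_mul_I_sub (hℓ : ∀ k, 0 ≤ ℓ k)
    (hsum : ∀ a > 0, Summable fun k => Real.exp (-(a * ℓ k))) {s : ℂ} (hs : 0 < s.re) (τ : ℝ) :
    expSum ℓ (s + τ * I) - expSum ℓ s
      = ∑' k, cexp (-(s * ℓ k)) * (cexp (τ * (-ℓ k : ℝ) * I) - 1) := by
  rw [expSum, expSum, ← (summable_cexp_neg_mul hℓ hsum (by simpa using hs)).tsum_sub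
    (summable_cexp_neg_mul hℓ hsum hs)]
  refine tsum_congr fun k => ?_
  rw [mul_sub, mul_one, ← Complex.exp_add]
  push_cast
  ring_nf

theorem expSum_verticallyAlmostPeriodic (hℓ : ∀ k, 0 ≤ ℓ k)
    (hsum : ∀ a > 0, Summable fun k => Real.exp (-(a * ℓ k))) :
    VerticallyAlmostPeriodic (expSum ℓ) := by
  intro a ha ε hε T
  set b := fun k => Real.exp (-(a * ℓ k))
  have hb := hsum a ha
  obtain ⟨N, hN⟩ := ((tendsto_order.1 (tendsto_sum_nat_add b)).2 (ε / 4) (by positivity)).exists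
  set B := ∑' k, b k
  have hB : 0 ≤ B := tsum_nonneg fun k => (Real.exp_pos _).le
  set δ := ε / (2 * (B + 1))
  obtain ⟨τ, hτ, hrec⟩ := exists_ge_forall_norm_cexp_sub_one_lt (fun k : Fin N => -ℓ k)
    (δ := δ) (by positivity) T
  refine ⟨τ, hτ, fun s hs => ?_⟩
  set d := fun k => cexp (-(s * ℓ k)) * (cexp (τ * (-ℓ k : ℝ) * I) - 1)
  have hd : ∀ k, ‖d k‖ ≤ b k * ‖cexp (τ * (-ℓ k : ℝ) * I) - 1‖ := fun k => by
    rw [norm_mul]; gcongr; exact norm_cexp_neg_mul_le (hℓ k) hs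
  have hd_tail : ∀ k, ‖d k‖ ≤ 2 * b k := fun k => by
    refine (hd k).trans ?_
    rw [mul_comm]
    gcongr
    refine (norm_sub_le _ _).trans_eq ?_
    rw [← ofReal_mul, norm_exp_ofReal_mul_I, norm_one]; norm_num
  have hd_sum : Summable d := (hb.mul_left 2).of_norm_bounded hd_tail
  have hhead : ‖∑ k ∈ Finset.range N, d k‖ ≤ δ * B := by
    calc ‖∑ k ∈ Finset.range N, d k‖ ≤ ∑ k ∈ Finset.range N, δ * b k := by
          refine (norm_sum_le _ _).trans (Finset.sum_le_sum fun k hk => (hd k).trans ?_)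
          rw [mul_comm]
          gcongr
          exact (hrec ⟨k, Finset.mem_range.1 hk⟩).le
      _ ≤ δ * B := by
          rw [← Finset.mul_sum]
          gcongr
          exact hb.sum_le_tsum _ fun k _ => (Real.exp_pos _).le
  have htail : ‖∑' k, d (k + N)‖ ≤ 2 * (ε / 4) := by
    calc ‖∑' k, d (k + N)‖ ≤ ∑' k, 2 * b (k + N) :=
          tsum_of_norm_bounded (((summable_nat_add_iff N).2 hb).mul_left 2).hasSum
            fun k => hd_tail (k + N)
      _ ≤ 2 * (ε / 4) := by rw [tsum_mul_left]; gcongr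
  have hδB : δ * B < ε / 2 := by
    rw [div_mul_eq_mul_div, div_lt_div_iff₀ (by positivity) two_pos]
    nlinarith
  rw [expSum_add_mul_I_sub hℓ hsum (ha.trans_le hs), ← hd_sum.sum_add_tsum_nat_add N]
  linarith [norm_add_le (∑ k ∈ Finset.range N, d k) (∑' k, d (k + N))]

end expSum

noncomputable def qFreq (k : ℕ) : ℝ := √(((k : ℝ) + 1) * (((k : ℝ) + 1) + 2)) / 2

theorem qFreq_nonneg (k : ℕ) : 0 ≤ qFreq k := by unfold qFreq; positivity

theorem Qfun_eq_expSum (s : ℂ) : Qfun s = 1 - 2 * expSum qFreq s := by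
  simp only [Qfun, expSum, qFreq, ofReal_div, ofReal_ofNat, mul_div_assoc]

theorem succ_div_two_le_qFreq (k : ℕ) : ((k : ℝ) + 1) / 2 ≤ qFreq k := by
  unfold qFreq
  gcongr
  exact Real.le_sqrt_of_sq_le (by nlinarith)

theorem exp_neg_mul_qFreq_le {a : ℝ} (ha : 0 ≤ a) (k : ℕ) :
    Real.exp (-(a * qFreq k)) ≤ Real.exp (-(a / 2)) ^ (k + 1) := by
  rw [← Real.exp_nat_mul, Real.exp_le_exp]
  push_cast
  nlinarith [succ_div_two_le_qFreq k]

theorem summable_geometric_succ {r : ℝ} (h₀ : 0 ≤ r) (h₁ : r < 1) :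
    Summable fun k : ℕ => r ^ (k + 1) :=
  (summable_nat_add_iff 1).2 (summable_geometric_of_lt_one h₀ h₁)

theorem summable_exp_neg_mul_qFreq {a : ℝ} (ha : 0 < a) :
    Summable fun k => Real.exp (-(a * qFreq k)) :=
  (summable_geometric_succ (Real.exp_pos _).le (Real.exp_lt_one_iff.2 (by linarith)))
    |>.of_nonneg_of_le (fun _ => (Real.exp_pos _).le) (exp_neg_mul_qFreq_le ha.le)

theorem Qfun_ofReal (σ : ℝ) : Qfun σ = ((1 - 2 * ∑' k, Real.exp (-(σ * qFreq k)) : ℝ) : ℂ) := by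
  rw [Qfun_eq_expSum, expSum]
  push_cast
  rfl

theorem lt_tsum_exp_neg_half_mul_qFreq : 1 / 2 < ∑' k, Real.exp (-(1 / 2 * qFreq k)) := by
  have hq₀ : qFreq 0 < 1 := by
    rw [qFreq, div_lt_one two_pos, Real.sqrt_lt' two_pos]
    norm_num
  calc (1 : ℝ) / 2 = Real.exp (-Real.log 2) := by rw [Real.exp_neg, Real.exp_log two_pos]; norm_num
    _ < Real.exp (-(1 / 2 * qFreq 0)) := by
        rw [Real.exp_lt_exp]; linarith [Real.log_two_gt_d9]
    _ ≤ ∑' k, Real.exp (-(1 / 2 * qFreq k)) :=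
        (summable_exp_neg_mul_qFreq one_half_pos).le_tsum 0 fun _ _ => (Real.exp_pos _).le

theorem tsum_exp_neg_four_mul_qFreq_lt : ∑' k, Real.exp (-(4 * qFreq k)) < 1 / 2 := by
  set r := Real.exp (-(4 / 2))
  have hr : 3 * r < 1 := by
    rw [show 3 * r = 3 / Real.exp 2 by norm_num [r, Real.exp_neg, div_eq_mul_inv],
      div_lt_one (Real.exp_pos _)]
    linarith [Real.add_one_lt_exp (two_ne_zero : (2 : ℝ) ≠ 0)]
  have hr₀ : 0 ≤ r := (Real.exp_pos _).le
  calc ∑' k, Real.exp (-(4 * qFreq k)) ≤ ∑' k : ℕ, r ^ (k + 1) :=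
        (summable_exp_neg_mul_qFreq four_pos).tsum_le_tsum (exp_neg_mul_qFreq_le zero_le_four)
          (summable_geometric_succ hr₀ (by linarith))
    _ = r / (1 - r) := by
        simp only [pow_succ, tsum_mul_right, tsum_geometric_of_lt_one hr₀ (by linarith)]
        ring
    _ < 1 / 2 := by rw [div_lt_div_iff₀ (by linarith) two_pos]; linarith

theorem differentiableOn_Qfun : DifferentiableOn ℂ Qfun {s | 0 < s.re} := by
  rw [funext Qfun_eq_expSum]
  exact (differentiableOn_const 1).sub ((differentiableOn_const 2).mul
    (differentiableOn_expSum qFreq_nonneg fun _ => summable_exp_neg_mul_qFreq))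

theorem exists_pos_Qfun_ofReal_eq_zero : ∃ σ : ℝ, 0 < σ ∧ Qfun σ = 0 := by
  set F := fun σ : ℝ => 1 - 2 * ∑' k, Real.exp (-(σ * qFreq k))
  have hF : ContinuousOn F (Icc (1 / 2) 4) := by
    refine (continuous_re.comp_continuousOn (differentiableOn_Qfun.continuousOn.comp
      continuous_ofReal.continuousOn fun σ hσ => ?_)).congr fun σ _ => ?_
    · simpa using one_half_pos.trans_le hσ.1
    · simp [F, Qfun_ofReal]
  have hF₀ : (0 : ℝ) ∈ Icc (F (1 / 2)) (F 4) :=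
    ⟨by linarith [lt_tsum_exp_neg_half_mul_qFreq], by linarith [tsum_exp_neg_four_mul_qFreq_lt]⟩
  obtain ⟨σ, hσ, hFσ⟩ := intermediate_value_Icc (by norm_num) hF hF₀
  exact ⟨σ, by linarith [hσ.1], by rw [Qfun_ofReal]; exact_mod_cast hFσ⟩

theorem Qfun_verticallyAlmostPeriodic : VerticallyAlmostPeriodic Qfun := by
  rw [funext Qfun_eq_expSum]
  exact (expSum_verticallyAlmostPeriodic qFreq_nonneg fun _ => summable_exp_neg_mul_qFreq)
    |>.const_sub_const_mul 1 2

theorem Qfun_four_ne_zero : Qfun 4 ≠ 0 := by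
  rw [← ofReal_ofNat, Qfun_ofReal, ofReal_ne_zero]
  linarith [tsum_exp_neg_four_mul_qFreq_lt]

/-- the set of zeros of `Q` in the right half-plane is infinite. -/
theorem stmt_14 : {s : ℂ | 0 < s.re ∧ Qfun s = 0}.Infinite := by
  obtain ⟨σ, hσ, hzero⟩ := exists_pos_Qfun_ofReal_eq_zero
  exact Qfun_verticallyAlmostPeriodic.setOf_zero_infinite differentiableOn_Qfun
    (by simpa using hσ) hzero (by norm_num) Qfun_four_ne_zero
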